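/- arXiv:2202.07062 — 3 statements merged into one kernel-verified Lean document; each statement's English description precedes it below -/
import Mathlib

section
/- Let X be a finite set of unit vectors in R^n with coherence α := max_{x≠y in X} |⟨x,y⟩| > 0. If x ∈ X is deficient, i.e., the set {y ∈ X : |⟨x,y⟩| = α} does not span R^n, then x is isolable: for every ε > 0 there exists a unit vector x' with ‖x - x'‖ < ε such that |⟨x', y⟩| < α for every y ∈ X \ {x}. -/
open scoped RealInnerProductSpace
abbrev E (n : ℕ) := EuclideanSpace ℝ (Fin n)
noncomputable def coh {n : ℕ} (X : Set (E n)) : ℝ :=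
  sSup {r : ℝ | ∃ x ∈ X, ∃ y ∈ X, x ≠ y ∧ r = |⟪x, y⟫|}

/-! Tilt `x` slightly in a direction `z` orthogonal to all its `α`-neighbours, with `⟪x, z⟫ ≥ 0`,
and renormalise. The inner product with a neighbour `y` becomes `⟪x, y⟫ / ‖x + t • z‖`, which is
strictly smaller in absolute value since `‖x + t • z‖ > 1`; the finitely many other vectors already
satisfy `|⟪x, y⟫| < α`, and continuity preserves that for small `t`. -/

open Filter Topology

section Tilt

variable {F : Type*} [NormedAddCommGroup F] [InnerProductSpace ℝ F]

lemma Submodule.exists_mem_ne_zero_inner_nonneg {K : Submodule ℝ F} (hK : K ≠ ⊥) (x : F) :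
    ∃ z ∈ K, z ≠ 0 ∧ 0 ≤ ⟪x, z⟫ := by
  obtain ⟨z, hzK, hz⟩ := Submodule.exists_mem_ne_zero_of_ne_bot hK
  rcases le_total 0 ⟪x, z⟫ with h | h
  · exact ⟨z, hzK, hz, h⟩
  · exact ⟨-z, K.neg_mem hzK, neg_ne_zero.2 hz, by rw [inner_neg_right]; linarith⟩

lemma one_lt_norm_add_smul {x z : F} (hx : ‖x‖ = 1) (hz : z ≠ 0) (hxz : 0 ≤ ⟪x, z⟫) {t : ℝ}
    (ht : 0 < t) : 1 < ‖x + t • z‖ := by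
  have hsq : 1 < ‖x + t • z‖ ^ 2 := by
    rw [norm_add_sq_real, norm_smul, real_inner_smul_right, hx, Real.norm_eq_abs, abs_of_pos ht]
    have := mul_pos ht (norm_pos_iff.2 hz)
    nlinarith
  exact (one_lt_sq_iff₀ (norm_nonneg _)).1 hsq

theorem exists_unit_near_abs_inner_lt {x : F} (hx : ‖x‖ = 1) {Y : Set F} (hY : Y.Finite)
    {α : ℝ} (hα : 0 < α) (hle : ∀ y ∈ Y, |⟪x, y⟫| ≤ α)
    (hspan : Submodule.span ℝ {y | y ∈ Y ∧ |⟪x, y⟫| = α} ≠ ⊤) {ε : ℝ} (hε : 0 < ε) :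
    ∃ x' : F, ‖x'‖ = 1 ∧ ‖x - x'‖ < ε ∧ ∀ y ∈ Y, |⟪x', y⟫| < α := by
  set S := {y | y ∈ Y ∧ |⟪x, y⟫| = α}
  have : FiniteDimensional ℝ (Submodule.span ℝ S) :=
    FiniteDimensional.span_of_finite ℝ (hY.subset fun _ hy => hy.1)
  obtain ⟨z, hzS, hz, hxz⟩ := Submodule.exists_mem_ne_zero_inner_nonneg
    (mt Submodule.orthogonal_eq_bot_iff.1 hspan) x
  set p : ℝ → F := fun t => ‖x + t • z‖⁻¹ • (x + t • z)
  have hp : Tendsto p (𝓝[>] 0) (𝓝 x) := by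
    have hline : Continuous fun t : ℝ => x + t • z := by fun_prop
    have hcont : ContinuousAt p 0 :=
      (hline.norm.continuousAt.inv₀ (by simp [hx])).smul hline.continuousAt
    simpa [p, hx] using hcont.tendsto.mono_left nhdsWithin_le_nhds
  have hnorm : ∀ᶠ t in 𝓝[>] 0, ‖p t‖ = 1 := eventually_nhdsWithin_of_forall fun t ht => by
    have := (zero_lt_one.trans (one_lt_norm_add_smul hx hz hxz ht)).ne'
    rw [norm_smul, norm_inv, norm_norm, inv_mul_cancel₀ this]
  have hclose : ∀ᶠ t in 𝓝[>] 0, ‖x - p t‖ < ε := by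
    filter_upwards [hp.eventually (Metric.ball_mem_nhds x hε)] with t ht
    rwa [dist_eq_norm'] at ht
  have hinner : ∀ y ∈ Y, ∀ᶠ t in 𝓝[>] 0, |⟪p t, y⟫| < α := by
    intro y hy
    rcases (hle y hy).lt_or_eq with hlt | heq
    · exact ((continuous_abs.tendsto _).comp (hp.inner tendsto_const_nhds)).eventually_lt_const hlt
    · filter_upwards [self_mem_nhdsWithin] with t ht
      have hzy : ⟪z, y⟫ = 0 :=
        Submodule.inner_left_of_mem_orthogonal (Submodule.subset_span (show y ∈ S from ⟨hy, heq⟩)) hzS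
      rw [real_inner_smul_left, inner_add_left, real_inner_smul_left, hzy, mul_zero, add_zero,
        abs_mul, abs_inv, abs_norm, heq]
      exact mul_lt_of_lt_one_left hα (inv_lt_one_of_one_lt₀ (one_lt_norm_add_smul hx hz hxz ht))
  obtain ⟨t, h1, h2, h3⟩ := (hnorm.and (hclose.and ((eventually_all_finite hY).2 hinner))).exists
  exact ⟨p t, h1, h2, h3⟩

end Tilt

lemma abs_inner_le_coh {n : ℕ} {X : Set (E n)} (hX : X.Finite) {x y : E n} (hx : x ∈ X)
    (hy : y ∈ X) (hxy : x ≠ y) : |⟪x, y⟫| ≤ coh X := by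
  refine le_csSup (((hX.prod hX).image fun p => |⟪p.1, p.2⟫|).subset ?_).bddAbove
    ⟨x, hx, y, hy, hxy, rfl⟩
  rintro r ⟨a, ha, b, hb, -, rfl⟩
  exact ⟨(a, b), ⟨ha, hb⟩, rfl⟩

theorem deficient_isolable {n : ℕ} (X : Set (E n)) (hfin : X.Finite)
    (hunit : ∀ x ∈ X, ‖x‖ = 1) (α : ℝ) (hα : α = coh X) (hpos : 0 < α)
    (x : E n) (hx : x ∈ X)
    (hdef : Submodule.span ℝ {y | y ∈ X ∧ y ≠ x ∧ |⟪x, y⟫| = α} ≠ ⊤) :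
    ∀ ε > 0, ∃ x' : E n, ‖x'‖ = 1 ∧ ‖x - x'‖ < ε ∧
      ∀ y ∈ X, y ≠ x → |⟪x', y⟫| < α := by
  intro ε hε
  obtain ⟨x', hunit', hclose, hlt⟩ := exists_unit_near_abs_inner_lt (hunit x hx) (hfin.sdiff (t := {x}))
    hpos (fun y hy => hα ▸ abs_inner_le_coh hfin hx hy.1 (Ne.symm hy.2))
    (by simpa only [Set.mem_sdiff, Set.mem_singleton_iff, and_assoc] using hdef) hε
  exact ⟨x', hunit', hclose, fun y hy hyx => hlt y ⟨hy, hyx⟩⟩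
end

section
/- Let X be a finite set of unit vectors in R^n and let {x₁,...,x_ℓ} be the set of isolable vectors of X. Then there exist unit vectors x₁',...,x_ℓ' such that for each i, |⟨xᵢ', v⟩| < coh(X) for every vector v in ((X minus the isolable vectors) ∪ {x₁',...,x_ℓ'}) other than xᵢ'. -/
open scoped RealInnerProductSpace
def IsUnitSet {n : ℕ} (X : Set (E n)) : Prop := ∀ x ∈ X, ‖x‖ = 1
def Isolated {n : ℕ} (X : Set (E n)) (x : E n) : Prop :=
  ∀ y ∈ X, y ≠ x → |⟪x, y⟫| < coh X
def Isolable {n : ℕ} (X : Set (E n)) (x : E n) : Prop :=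
  ∀ ε > 0, ∃ x' : E n, ‖x'‖ = 1 ∧ ‖x - x'‖ < ε ∧ ∀ y ∈ X, y ≠ x → |⟪x', y⟫| < coh X
def Grassmannian {n : ℕ} (m : ℕ) (X : Set (E n)) : Prop :=
  IsUnitSet X ∧ X.Finite ∧ X.ncard = m ∧
    ∀ Y : Set (E n), IsUnitSet Y → Y.Finite → Y.ncard = m → coh X ≤ coh Y

/-!
Replace the isolable vectors one at a time. Each replacement is chosen to have inner product
below `c` in absolute value with every member of `Y` other than its own original, in particular
with every isolable vector still waiting. So the next isolable vector lies in the open set of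
vectors having small inner product with all replacements made so far, and its isolability yields
a replacement inside that set.
-/

section Replacement

variable {V : Type*} [NormedAddCommGroup V] [InnerProductSpace ℝ V]

/-- `Isolable X x` is `IsolableBelow X (coh X) x`. -/
def IsolableBelow (Y : Set V) (c : ℝ) (x : V) : Prop :=
  ∀ ε > 0, ∃ x' : V, ‖x'‖ = 1 ∧ ‖x - x'‖ < ε ∧ ∀ y ∈ Y, y ≠ x → |⟪x', y⟫| < c

theorem IsolableBelow.exists_mem_of_isOpen {Y : Set V} {c : ℝ} {x : V}
    (hx : IsolableBelow Y c x) {U : Set V} (hU : IsOpen U) (hxU : x ∈ U) :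
    ∃ x' ∈ U, ‖x'‖ = 1 ∧ ∀ y ∈ Y, y ≠ x → |⟪x', y⟫| < c := by
  obtain ⟨ε, hε, hball⟩ := Metric.isOpen_iff.1 hU x hxU
  obtain ⟨x', hx'1, hxx', hx'Y⟩ := hx ε hε
  refine ⟨x', hball ?_, hx'1, hx'Y⟩
  rwa [Metric.mem_ball, dist_comm, dist_eq_norm]

theorem isOpen_setOf_forall_abs_inner_lt {ι : Type*} (s : Finset ι) (z : ι → V) (c : ℝ) :
    IsOpen {x : V | ∀ j ∈ s, |⟪x, z j⟫| < c} := by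
  simp only [Set.ofPred_forall]
  exact isOpen_biInter_finset fun j _ => isOpen_lt (by fun_prop) continuous_const

variable {ι : Type*} (Y : Set V) (c : ℝ) (f : ι → V)

def IsReplacementOn (s : Finset ι) (g : ι → V) : Prop :=
  ∀ i ∈ s, ‖g i‖ = 1 ∧ (∀ y ∈ Y, y ≠ f i → |⟪g i, y⟫| < c) ∧
    ∀ j ∈ s, j ≠ i → |⟪g i, g j⟫| < c

variable {Y c f}

theorem IsReplacementOn.exists_insert [DecidableEq ι] (hf : Function.Injective f)
    (hfY : ∀ i, f i ∈ Y) {s : Finset ι} {g : ι → V} (hg : IsReplacementOn Y c f s g)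
    {a : ι} (ha : a ∉ s) (hiso : IsolableBelow Y c (f a)) :
    ∃ g' : ι → V, IsReplacementOn Y c f (insert a s) g' := by
  have hfa : f a ∈ {x : V | ∀ j ∈ s, |⟪x, g j⟫| < c} := fun j hj => by
    rw [real_inner_comm]
    exact (hg j hj).2.1 (f a) (hfY a) (hf.ne (ne_of_mem_of_not_mem hj ha).symm)
  obtain ⟨x', hx'U, hx'1, hx'Y⟩ :=
    hiso.exists_mem_of_isOpen (isOpen_setOf_forall_abs_inner_lt s g c) hfa
  have hupdate : ∀ j ∈ s, Function.update g a x' j = g j := fun j hj =>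
    Function.update_of_ne (ne_of_mem_of_not_mem hj ha) _ _
  refine ⟨Function.update g a x', fun i hi => ?_⟩
  rcases Finset.mem_insert.1 hi with rfl | his
  · refine ⟨by simpa using hx'1, by simpa using hx'Y, fun j hj hji => ?_⟩
    rcases Finset.mem_insert.1 hj with rfl | hj
    · exact absurd rfl hji
    · simpa [hupdate j hj] using hx'U j hj
  · obtain ⟨hg1, hgY, hgg⟩ := hg i his
    rw [hupdate i his]
    refine ⟨hg1, hgY, fun j hj hji => ?_⟩
    rcases Finset.mem_insert.1 hj with rfl | hj
    · simpa [real_inner_comm] using hx'U i his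
    · simpa [hupdate j hj] using hgg j hj hji

theorem exists_isolated_replacement [Fintype ι] (hf : Function.Injective f)
    (hfY : ∀ i, f i ∈ Y) (hiso : ∀ i, IsolableBelow Y c (f i)) :
    ∃ g : ι → V, (∀ i, ‖g i‖ = 1) ∧ (∀ i, ∀ y ∈ Y, y ≠ f i → |⟪g i, y⟫| < c) ∧
      Pairwise fun i j => |⟪g i, g j⟫| < c := by
  classical
  have hall : ∀ s : Finset ι, ∃ g, IsReplacementOn Y c f s g := by
    intro s
    induction s using Finset.induction_on with
    | empty => exact ⟨f, by simp [IsReplacementOn]⟩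
    | insert a s ha ih =>
      obtain ⟨g, hg⟩ := ih
      exact hg.exists_insert hf hfY ha (hiso a)
  obtain ⟨g, hg⟩ := hall Finset.univ
  exact ⟨g, fun i => (hg i (Finset.mem_univ i)).1, fun i => (hg i (Finset.mem_univ i)).2.1,
    fun i j hij => (hg i (Finset.mem_univ i)).2.2 j (Finset.mem_univ j) hij.symm⟩

end Replacement

theorem replace_isolable_vectors_general {n ℓ : ℕ} (X : Set (E n))
    (f : Fin ℓ → E n) (hinj : Function.Injective f)
    (hrange : Set.range f = {x ∈ X | Isolable X x}) :
    ∃ g : Fin ℓ → E n, (∀ i, ‖g i‖ = 1) ∧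
      ∀ i : Fin ℓ, ∀ v ∈ (X \ {x ∈ X | Isolable X x}) ∪ Set.range g,
        v ≠ g i → |⟪g i, v⟫| < coh X := by
  have hf : ∀ i, f i ∈ X ∧ Isolable X (f i) := fun i =>
    hrange.subset (Set.mem_range_self i)
  obtain ⟨g, hg1, hgX, hgg⟩ :=
    exists_isolated_replacement hinj (fun i => (hf i).1) (fun i => (hf i).2)
  refine ⟨g, hg1, fun i v hv hne => ?_⟩
  rcases hv with ⟨hvX, hvnot⟩ | ⟨j, rfl⟩
  · exact hgX i v hvX fun h => hvnot ⟨hvX, h ▸ (hf i).2⟩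
  · exact hgg fun h => hne (congrArg g h.symm)

theorem replace_isolable_vectors {n ℓ : ℕ} (X : Set (E n))
    (hfin : X.Finite) (hunit : IsUnitSet X)
    (f : Fin ℓ → E n) (hinj : Function.Injective f)
    (hrange : Set.range f = {x ∈ X | Isolable X x}) :
    ∃ g : Fin ℓ → E n, (∀ i, ‖g i‖ = 1) ∧
      ∀ i : Fin ℓ, ∀ v ∈ (X \ {x ∈ X | Isolable X x}) ∪ Set.range g,
        v ≠ g i → |⟪g i, v⟫| < coh X :=
  replace_isolable_vectors_general X f hinj hrange
end

section
/- For any n ≥ 2, there is no equiangular tight frame of n+2 vectors for R^n. Equivalently, (2/n)·cos(π/(n+2)) > √(2/(n(n+1))). -/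
open scoped RealInnerProductSpace
noncomputable def cohF {n m : ℕ} (x : Fin m → E n) : ℝ :=
  sSup {r : ℝ | ∃ i j : Fin m, i ≠ j ∧ r = |⟪x i, x j⟫|}

/-!
The Gram matrix `G` of such a frame is symmetric with unit diagonal, `|G i j| = c` off the
diagonal, and `G * G = ((n + 2) / n) • G`. A diagonal entry of this identity gives the Welch value
`c ^ 2 = 2 / (n (n + 1))`. An off-diagonal entry gives `∑_{i ≠ k, l} G k i * G i l =
((2 - n) / n) * G k l`, whose left side is an integer multiple `S * c ^ 2`; squaring yields
`2 n S ^ 2 = (n + 1) (n - 2) ^ 2`, so `n ∣ 4`, and `n = 4` fails by parity. For `n = 2` the three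
relations with `k = 0` multiply to `2 c ^ 4 G 0 2 G 1 3 = 0`, forcing `c = 0`.

The inequality follows from `cos (π / (n + 2)) ≥ cos (π / 4)` and `n ^ 2 < n (n + 1)`.
-/

open Finset Matrix

section Gram

variable {ι F : Type*} [NormedAddCommGroup F] [InnerProductSpace ℝ F]

theorem gram_mul_gram_of_tight [Fintype ι] {x : ι → F} {A : ℝ}
    (hx : ∀ v, ∑ i, ⟪x i, v⟫ • x i = A • v) : gram ℝ x * gram ℝ x = A • gram ℝ x := by
  ext k l
  have h := congrArg (⟪x k, ·⟫) (hx (x l))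
  simp only [inner_sum, real_inner_smul_right] at h
  simpa only [mul_apply, gram_apply, Matrix.smul_apply, smul_eq_mul, mul_comm] using h

theorem isSymm_gram_real (x : ι → F) : (gram ℝ x).IsSymm :=
  isHermitian_iff_isSymm.mp (isHermitian_gram ℝ x)

theorem gram_apply_self_of_norm_eq_one {x : ι → F} (hx : ∀ i, ‖x i‖ = 1) (i : ι) :
    gram ℝ x i i = 1 := by
  rw [gram_apply, real_inner_self_eq_norm_sq, hx i, one_pow]

end Gram

section Equiangular

variable {ι : Type*} [Fintype ι] [DecidableEq ι] {G : Matrix ι ι ℝ} {A c : ℝ}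

theorem one_add_card_sub_one_mul_sq_eq (hsymm : G.IsSymm) (hdiag : ∀ i, G i i = 1)
    (hc : ∀ i j, i ≠ j → |G i j| = c) (hG : G * G = A • G) (k : ι) :
    1 + ((Fintype.card ι : ℝ) - 1) * c ^ 2 = A := by
  have h := congrFun (congrFun hG k) k
  rw [mul_apply, ← add_sum_erase _ _ (mem_univ k), Matrix.smul_apply, hdiag, smul_eq_mul,
    mul_one, mul_one] at h
  have hoff : ∀ i ∈ univ.erase k, G k i * G i k = c ^ 2 := fun i hi => by
    rw [hsymm.apply k i, ← sq, ← sq_abs, hc k i (ne_of_mem_erase hi).symm]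
  rwa [sum_congr rfl hoff, sum_const, card_erase_of_mem (mem_univ k), card_univ, nsmul_eq_mul,
    Nat.cast_sub (Fintype.card_pos_iff.mpr ⟨k⟩), Nat.cast_one] at h

theorem sum_erase_erase_mul_eq (hdiag : ∀ i, G i i = 1) (hG : G * G = A • G) {k l : ι}
    (hkl : k ≠ l) : ∑ i ∈ (univ.erase k).erase l, G k i * G i l = (A - 2) * G k l := by
  have h := congrFun (congrFun hG k) l
  rw [mul_apply, ← add_sum_erase _ _ (mem_univ k),
    ← add_sum_erase _ _ (mem_erase.mpr ⟨hkl.symm, mem_univ l⟩), hdiag, hdiag, Matrix.smul_apply,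
    smul_eq_mul] at h
  linarith

end Equiangular

theorem exists_int_sum_eq_mul_of_abs_eq {ι : Type*} {s : Finset ι} {a : ι → ℝ} {c : ℝ}
    (h : ∀ i ∈ s, |a i| = c) : ∃ S : ℤ, ∑ i ∈ s, a i = S * c := by
  refine ⟨∑ i ∈ s, if 0 ≤ a i then 1 else -1, ?_⟩
  rw [Int.cast_sum, sum_mul]
  refine sum_congr rfl fun i hi => ?_
  rw [← h i hi]
  split_ifs with hai
  · rw [abs_of_nonneg hai]; simp
  · rw [abs_of_neg (not_le.mp hai)]; simp

theorem le_two_of_two_mul_mul_sq_eq {n : ℕ} {S : ℤ}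
    (h : 2 * n * S ^ 2 = (n + 1) * (n - 2 : ℤ) ^ 2) : n ≤ 2 := by
  by_contra! hn
  have hdvd : (n : ℤ) ∣ 4 := ⟨2 * S ^ 2 - n ^ 2 + 3 * n, by linear_combination -h⟩
  have hle : n ≤ 4 := Nat.le_of_dvd (by norm_num) (by exact_mod_cast hdvd)
  interval_cases n
  · norm_num at hdvd
  · omega

theorem eq_zero_of_equiangular_fin_four {G : Matrix (Fin 4) (Fin 4) ℝ} {c : ℝ}
    (hsymm : G.IsSymm) (hdiag : ∀ i, G i i = 1) (hc : ∀ i j, i ≠ j → |G i j| = c)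
    (hG : ∀ k l, k ≠ l → (G * G) k l = 2 * G k l) : c = 0 := by
  have hsq : ∀ i j, i ≠ j → G i j ^ 2 = c ^ 2 := fun i j hij => by rw [← sq_abs, hc i j hij]
  have e : ∀ l, (0 : Fin 4) ≠ l → ∑ i, G 0 i * G i l = 2 * G 0 l := fun l h => by
    rw [← mul_apply, hG 0 l h]
  have e1 := e 1 (by decide)
  have e2 := e 2 (by decide)
  have e3 := e 3 (by decide)
  simp only [Fin.sum_univ_four, hdiag, hsymm.apply 1 2, hsymm.apply 1 3, hsymm.apply 2 3]
    at e1 e2 e3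
  have s01 := hsq 0 1 (by decide)
  have s02 := hsq 0 2 (by decide)
  have s03 := hsq 0 3 (by decide)
  have s12 := hsq 1 2 (by decide)
  have s13 := hsq 1 3 (by decide)
  have s23 := hsq 2 3 (by decide)
  -- `e1`, `e2`, `e3` read `p₁ = -q₁`, `p₂ = -q₂`, `p₃ = -q₃`, so `p₁ p₂ p₃ = -q₁ q₂ q₃`, and
  -- by symmetry both triple products equal `c ^ 4 * G 0 2 * G 1 3`
  have key : c ^ 4 * (G 0 2 * G 1 3) = 0 := by
    linear_combination (1 / 2 : ℝ) * ((G 0 1 * G 1 2 * (G 0 1 * G 1 3)) * e1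
      - (G 0 3 * G 1 3 * (G 0 1 * G 1 3)) * e2 + (G 0 3 * G 1 3 * (G 0 3 * G 2 3)) * e3
      - G 1 2 ^ 2 * (G 0 2 * G 1 3) * s01 - c ^ 2 * (G 0 2 * G 1 3) * s12
      - G 2 3 ^ 2 * (G 0 2 * G 1 3) * s03 - c ^ 2 * (G 0 2 * G 1 3) * s23)
  have hc8 : c ^ 8 = 0 := by
    linear_combination (G 0 2 * G 1 3) * key - c ^ 4 * (c ^ 2 * s13 + G 1 3 ^ 2 * s02)
  exact pow_eq_zero_iff (by norm_num) |>.mp hc8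

section NAddTwo

variable {n : ℕ} {G : Matrix (Fin (n + 2)) (Fin (n + 2)) ℝ} {c : ℝ}

theorem sq_eq_of_equiangular_of_mul_self_eq (hn : 0 < n) (hsymm : G.IsSymm)
    (hdiag : ∀ i, G i i = 1) (hc : ∀ i j, i ≠ j → |G i j| = c)
    (hG : G * G = (((n : ℝ) + 2) / n) • G) : c ^ 2 = 2 / (n * (n + 1)) := by
  have h := one_add_card_sub_one_mul_sq_eq hsymm hdiag hc hG 0
  rw [Fintype.card_fin, Nat.cast_add, Nat.cast_two] at h
  field_simp at h ⊢
  linarith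

theorem exists_int_two_mul_mul_sq_eq_of_equiangular (hn : 0 < n) (hsymm : G.IsSymm)
    (hdiag : ∀ i, G i i = 1) (hc : ∀ i j, i ≠ j → |G i j| = c)
    (hG : G * G = (((n : ℝ) + 2) / n) • G) :
    ∃ S : ℤ, 2 * n * S ^ 2 = (n + 1) * (n - 2 : ℤ) ^ 2 := by
  have hc2 := sq_eq_of_equiangular_of_mul_self_eq hn hsymm hdiag hc hG
  have hc0 : c ≠ 0 := by
    rintro rfl
    have : (0 : ℝ) < 2 / (n * (n + 1)) := by positivity
    linarith
  have h01 : (0 : Fin (n + 2)) ≠ 1 := by simp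
  obtain ⟨S, hS⟩ := exists_int_sum_eq_mul_of_abs_eq (s := (univ.erase 0).erase 1)
    (a := fun i => G 0 i * G i 1) (c := c ^ 2) fun i hi => by
      rw [abs_mul, hc 0 i (ne_of_mem_erase (mem_of_mem_erase hi)).symm,
        hc i 1 (ne_of_mem_erase hi), sq]
  rw [sum_erase_erase_mul_eq hdiag hG h01] at hS
  have hlin : ((n : ℝ) - 2) * G 0 1 = -(n * S * c ^ 2) := by
    field_simp at hS
    linear_combination -hS
  have hsq : ((n : ℝ) - 2) ^ 2 = n ^ 2 * S ^ 2 * c ^ 2 := by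
    refine mul_right_cancel₀ (pow_ne_zero 2 hc0) ?_
    calc ((n : ℝ) - 2) ^ 2 * c ^ 2 = (((n : ℝ) - 2) * G 0 1) ^ 2 := by
          rw [mul_pow, ← sq_abs (G 0 1), hc 0 1 h01]
      _ = _ := by rw [hlin]; ring
  rw [hc2] at hsq
  field_simp at hsq
  refine ⟨S, ?_⟩
  have hreal : 2 * n * (S : ℝ) ^ 2 = (n + 1) * (n - 2) ^ 2 := by linear_combination -hsq
  exact_mod_cast hreal

theorem not_equiangular_of_mul_self_eq (hn : 2 ≤ n) (hsymm : G.IsSymm)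
    (hdiag : ∀ i, G i i = 1) (hc : ∀ i j, i ≠ j → |G i j| = c)
    (hG : G * G = (((n : ℝ) + 2) / n) • G) : False := by
  obtain rfl | hn2 := hn.eq_or_lt
  · have hc2 := sq_eq_of_equiangular_of_mul_self_eq two_pos hsymm hdiag hc hG
    rw [eq_zero_of_equiangular_fin_four hsymm hdiag hc fun k l _ => by rw [hG]; norm_num] at hc2
    norm_num at hc2
  · obtain ⟨S, hS⟩ := exists_int_two_mul_mul_sq_eq_of_equiangular (by omega) hsymm hdiag hc hG
    exact hn2.not_ge (le_two_of_two_mul_mul_sq_eq hS)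

end NAddTwo

theorem sqrt_two_div_two_le_cos_pi_div {x : ℝ} (hx : 4 ≤ x) :
    √2 / 2 ≤ Real.cos (Real.pi / x) := by
  rw [← Real.cos_pi_div_four]
  apply Real.cos_le_cos_of_nonneg_of_le_pi (by positivity) (by linarith [Real.pi_pos])
  exact div_le_div_of_nonneg_left Real.pi_pos.le (by norm_num) hx

theorem sqrt_two_div_mul_succ_lt {n : ℕ} (hn : 2 ≤ n) :
    √(2 / (n * (n + 1))) < 2 / n * Real.cos (Real.pi / (n + 2)) := by
  have hn' : (2 : ℝ) ≤ n := by exact_mod_cast hn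
  calc √(2 / (n * (n + 1))) < √(2 / (n * n)) := by
        apply Real.sqrt_lt_sqrt (by positivity)
        apply div_lt_div_of_pos_left two_pos (by positivity)
        nlinarith
    _ = 2 / n * (√2 / 2) := by
        rw [Real.sqrt_div zero_le_two, Real.sqrt_mul_self (by positivity)]
        ring
    _ ≤ 2 / n * Real.cos (Real.pi / (n + 2)) := by
        gcongr
        exact sqrt_two_div_two_le_cos_pi_div (by linarith)

theorem no_etf_n_add_two (n : ℕ) (hn : 2 ≤ n) :
    (¬ ∃ x : Fin (n + 2) → E n, (∀ i, ‖x i‖ = 1) ∧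
      (∀ v : E n, ∑ i, ⟪x i, v⟫ • x i = (((n : ℝ) + 2) / n) • v) ∧
      ∃ c : ℝ, ∀ i j : Fin (n + 2), i ≠ j → |⟪x i, x j⟫| = c) ∧
    (2 / (n : ℝ)) * Real.cos (Real.pi / (n + 2)) > Real.sqrt (2 / ((n : ℝ) * (n + 1))) := by
  refine ⟨?_, sqrt_two_div_mul_succ_lt hn⟩
  rintro ⟨x, hunit, htight, c, hc⟩
  exact not_equiangular_of_mul_self_eq hn (isSymm_gram_real x)
    (gram_apply_self_of_norm_eq_one hunit) hc (gram_mul_gram_of_tight htight)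
end
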